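/- If a graph G with an orientation D has an Euler circuit extension as in the standard construction, then orienting each edge along an Euler circuit of a graph all of whose degrees are even yields |d⁺(v) − d⁻(v)| ≤ 1 for every vertex v; more generally, for any graph G there exists an orientation D of G such that |d⁺_D(v) − d⁻_D(v)| ≤ 1 for every vertex v. -/

import Mathlib

open Finset

/-- An orientation of a simple graph: each edge gets a tail and a head. -/
structure GraphOrientation {V : Type*} (G : SimpleGraph V) where
  tail : G.edgeSet → V
  head : G.edgeSet → V
  consistent : ∀ e : G.edgeSet, (e : Sym2 V) = s(tail e, head e)

/-- Vertex sum: sum of labels of in-edges minus sum of labels of out-edges. -/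
def vertexSum {V : Type*} {G : SimpleGraph V} [Fintype G.edgeSet] [DecidableEq V]
    (D : GraphOrientation G) (τ : G.edgeSet → ℤ) (v : V) : ℤ :=
  (∑ e : G.edgeSet, if D.head e = v then τ e else 0)
    - ∑ e : G.edgeSet, if D.tail e = v then τ e else 0

/-- In-degree of a vertex under an orientation. -/
def inDeg {V : Type*} {G : SimpleGraph V} [Fintype G.edgeSet] [DecidableEq V]
    (D : GraphOrientation G) (v : V) : ℕ :=
  (Finset.univ.filter fun e : G.edgeSet => D.head e = v).card

/-- Out-degree of a vertex under an orientation. -/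
def outDeg {V : Type*} {G : SimpleGraph V} [Fintype G.edgeSet] [DecidableEq V]
    (D : GraphOrientation G) (v : V) : ℕ :=
  (Finset.univ.filter fun e : G.edgeSet => D.tail e = v).card

/-- A graph admits an antimagic orientation. -/
def AdmitsAntimagicOrientation {V : Type*} [DecidableEq V] (G : SimpleGraph V)
    [Fintype G.edgeSet] : Prop :=
  ∃ (D : GraphOrientation G) (τ : G.edgeSet → ℤ),
    Set.BijOn τ Set.univ (Set.Icc (1 : ℤ) (Fintype.card G.edgeSet)) ∧
    Function.Injective (vertexSum D τ)

/-- The Mycielski construction. `Sum.inl a` are original vertices,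
`Sum.inr (Sum.inl a)` their images, `Sum.inr (Sum.inr ())` the apex `w`. -/
def mycielski {V : Type*} (G : SimpleGraph V) : SimpleGraph (V ⊕ (V ⊕ Unit)) where
  Adj x y :=
    match x, y with
    | .inl a, .inl b => G.Adj a b
    | .inl a, .inr (.inl b) => G.Adj a b
    | .inr (.inl a), .inl b => G.Adj a b
    | .inr (.inl _), .inr (.inr _) => True
    | .inr (.inr _), .inr (.inl _) => True
    | _, _ => False
  symm := by
    constructor
    rintro (a | b | c) (a' | b' | c') h <;> simp_all <;> exact G.adj_symm h
  loopless := by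
    constructor
    rintro (a | b | c) h <;> simp_all

/-!
Take an orientation minimising `∑ v, |d⁺(v) - d⁻(v)|`. If `d⁺(v) - d⁻(v) ≥ 2` at some `v`, the set
`S` of vertices reachable from `v` along directed walks has no edge leaving it, so
`∑ u ∈ S, (d⁺(u) - d⁻(u)) ≤ 0` and some `u ∈ S` has `d⁺(u) < d⁻(u)`. Reversing a directed path from
`v` to `u` changes the imbalance only at its ends, by `-2` at `v` and `+2` at `u`, and so lowers the
sum: a contradiction. Reversing every edge turns the case `d⁺(v) - d⁻(v) ≤ -2` into this one.
-/

namespace GraphOrientation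

variable {V : Type*} {G : SimpleGraph V}

instance : Nonempty (GraphOrientation G) :=
  ⟨⟨fun e => (e : Sym2 V).out.1, fun e => (e : Sym2 V).out.2,
    fun e => (Quot.out_eq (e : Sym2 V)).symm⟩⟩

def reverse (D : GraphOrientation G) : GraphOrientation G :=
  ⟨D.head, D.tail, fun e => (D.consistent e).trans Sym2.eq_swap⟩

def reverseEdge [DecidableEq V] (D : GraphOrientation G) (e₀ : G.edgeSet) :
    GraphOrientation G where
  tail e := if e = e₀ then D.head e else D.tail e
  head e := if e = e₀ then D.tail e else D.head e
  consistent e := by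
    split_ifs
    · exact (D.consistent e).trans Sym2.eq_swap
    · exact D.consistent e

def IsDirected (D : GraphOrientation G) {u v : V} (p : G.Walk u v) : Prop :=
  ∀ d ∈ p.darts, D.tail ⟨d.edge, d.edge_mem⟩ = d.fst ∧ D.head ⟨d.edge, d.edge_mem⟩ = d.snd

def Reaches (D : GraphOrientation G) (u v : V) : Prop := ∃ p : G.Walk u v, D.IsDirected p

theorem reaches_refl (D : GraphOrientation G) (u : V) : D.Reaches u u :=
  ⟨.nil, by simp [IsDirected]⟩

theorem Reaches.concat {D : GraphOrientation G} {u : V} {e : G.edgeSet}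
    (h : D.Reaches u (D.tail e)) : D.Reaches u (D.head e) := by
  obtain ⟨p, hp⟩ := h
  have hadj : G.Adj (D.tail e) (D.head e) := by
    rw [← SimpleGraph.mem_edgeSet, ← D.consistent e]; exact e.2
  refine ⟨p.concat hadj, fun d hd => ?_⟩
  rw [SimpleGraph.Walk.darts_concat, List.concat_eq_append, List.mem_append,
    List.mem_singleton] at hd
  rcases hd with hd | rfl
  · exact hp d hd
  · have he : (⟨s(D.tail e, D.head e), hadj⟩ : G.edgeSet) = e :=
      Subtype.ext (D.consistent e).symm
    exact ⟨congrArg D.tail he, congrArg D.head he⟩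

theorem Reaches.exists_isPath {D : GraphOrientation G} {u v : V} (h : D.Reaches u v) :
    ∃ p : G.Walk u v, p.IsPath ∧ D.IsDirected p := by
  classical
  obtain ⟨p, hp⟩ := h
  exact ⟨p.bypass, p.bypass_isPath, fun d hd => hp d (p.darts_bypass_subset_darts hd)⟩

section Imbalance

variable [Fintype G.edgeSet] [DecidableEq V]

def imbalance (D : GraphOrientation G) (v : V) : ℤ := outDeg D v - inDeg D v

def totalImbalance [Fintype V] (D : GraphOrientation G) : ℕ := ∑ v, (D.imbalance v).natAbs

theorem imbalance_eq_sum (D : GraphOrientation G) (v : V) :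
    D.imbalance v = ∑ e, ((if D.tail e = v then 1 else 0) - if D.head e = v then 1 else 0) := by
  simp only [imbalance, outDeg, inDeg, card_filter, sum_sub_distrib]
  push_cast
  rfl

theorem imbalance_reverse (D : GraphOrientation G) (v : V) :
    D.reverse.imbalance v = -D.imbalance v :=
  (neg_sub _ _).symm

theorem totalImbalance_reverse [Fintype V] (D : GraphOrientation G) :
    D.reverse.totalImbalance = D.totalImbalance := by
  simp only [totalImbalance, imbalance_reverse, Int.natAbs_neg]

theorem imbalance_reverseEdge (D : GraphOrientation G) (e₀ : G.edgeSet) (v : V) :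
    (D.reverseEdge e₀).imbalance v = D.imbalance v
      - 2 * ((if D.tail e₀ = v then 1 else 0) - if D.head e₀ = v then 1 else 0) := by
  rw [imbalance_eq_sum, imbalance_eq_sum, ← Fintype.sum_ite_eq' e₀
    fun e => 2 * ((if D.tail e = v then (1 : ℤ) else 0) - if D.head e = v then 1 else 0),
    ← sum_sub_distrib]
  refine sum_congr rfl fun e _ => ?_
  by_cases he : e = e₀
  · subst he; simp only [reverseEdge, if_true]; ring
  · simp [reverseEdge, he]

theorem sum_outDeg_le_sum_inDeg (D : GraphOrientation G) (S : Finset V)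
    (hS : ∀ e, D.tail e ∈ S → D.head e ∈ S) :
    ∑ v ∈ S, outDeg D v ≤ ∑ v ∈ S, inDeg D v := by
  simp only [outDeg, inDeg, card_filter]
  rw [sum_comm, sum_comm (s := S)]
  refine sum_le_sum fun e _ => ?_
  simp only [sum_ite_eq]
  split_ifs <;> simp_all

theorem exists_imbalance_eq_of_isTrail (D : GraphOrientation G) {u v : V} (p : G.Walk u v)
    (hp : p.IsTrail) (hD : D.IsDirected p) :
    ∃ D' : GraphOrientation G, ∀ x, D'.imbalance x =
      D.imbalance x - 2 * ((if u = x then 1 else 0) - if v = x then 1 else 0) := by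
  induction p generalizing D with
  | nil => exact ⟨D, fun x => by simp⟩
  | @cons u w v h q ih =>
    let e₀ : G.edgeSet := ⟨s(u, w), h⟩
    obtain ⟨htail, hhead⟩ : D.tail e₀ = u ∧ D.head e₀ = w := hD ⟨(u, w), h⟩ (by simp)
    rw [SimpleGraph.Walk.isTrail_cons] at hp
    have hq : (D.reverseEdge e₀).IsDirected q := by
      intro d hd
      have hne : (⟨d.edge, d.edge_mem⟩ : G.edgeSet) ≠ e₀ := fun he =>
        hp.2 (by rw [show s(u, w) = d.edge from congrArg Subtype.val he.symm]
                 exact List.mem_map_of_mem hd)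
      simpa [reverseEdge, hne] using hD d (by simp [hd])
    obtain ⟨D', hD'⟩ := ih (D.reverseEdge e₀) hp.1 hq
    refine ⟨D', fun x => ?_⟩
    rw [hD', imbalance_reverseEdge, htail, hhead]
    ring

theorem exists_totalImbalance_lt [Fintype V] (D : GraphOrientation G) {v : V}
    (hv : 2 ≤ D.imbalance v) : ∃ D' : GraphOrientation G, D'.totalImbalance < D.totalImbalance := by
  classical
  let S := univ.filter (D.Reaches v)
  have hvS : v ∈ S := mem_filter.2 ⟨mem_univ v, D.reaches_refl v⟩
  obtain ⟨u, huS, hu⟩ : ∃ u ∈ S, D.imbalance u < 0 := by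
    by_contra! hS
    have hle := D.sum_outDeg_le_sum_inDeg S fun e he =>
      mem_filter.2 ⟨mem_univ _, (mem_filter.1 he).2.concat⟩
    have hlt : ∑ x ∈ S, inDeg D x < ∑ x ∈ S, outDeg D x :=
      sum_lt_sum (fun x hx => by have := hS x hx; unfold imbalance at this; omega)
        ⟨v, hvS, by unfold imbalance at hv; omega⟩
    omega
  obtain ⟨p, hp, hpD⟩ := (mem_filter.1 huS).2.exists_isPath
  obtain ⟨D', hD'⟩ := D.exists_imbalance_eq_of_isTrail p hp.isTrail hpD
  refine ⟨D', sum_lt_sum (fun x _ => ?_) ⟨v, mem_univ v, ?_⟩⟩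
  · rw [hD']
    split_ifs <;> subst_vars <;> omega
  · have huv : u ≠ v := by rintro rfl; omega
    rw [hD', if_pos rfl, if_neg huv]
    omega

end Imbalance

end GraphOrientation

/-- every graph has an orientation with |d⁺(v) − d⁻(v)| ≤ 1 for all v. -/
theorem exists_balanced_orientation {V : Type*} [Fintype V] [DecidableEq V]
    (G : SimpleGraph V) [Fintype G.edgeSet] :
    ∃ D : GraphOrientation G, ∀ v : V, |(outDeg D v : ℤ) - (inDeg D v : ℤ)| ≤ 1 := by
  let D := Function.argmin (GraphOrientation.totalImbalance (G := G))
  have hmin (D' : GraphOrientation G) : D.totalImbalance ≤ D'.totalImbalance :=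
    Function.argmin_le _ D'
  refine ⟨D, fun v => abs_le.2 ⟨?_, ?_⟩⟩
  · by_contra! hv
    obtain ⟨D', hD'⟩ := D.reverse.exists_totalImbalance_lt (v := v)
      (by rw [D.imbalance_reverse, GraphOrientation.imbalance]; omega)
    exact (hmin D').not_gt (D.totalImbalance_reverse ▸ hD')
  · by_contra! hv
    obtain ⟨D', hD'⟩ := D.exists_totalImbalance_lt (v := v)
      (by rw [GraphOrientation.imbalance]; omega)
    exact (hmin D').not_gt hD'
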